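/- The determinant of the Hessian matrix of the function P_m^{1/2}(ξ) := √(P_m(ξ)) is nonzero at every ξ ∈ ℝⁿ \ {0}, i.e. det(∂²(P_m^{1/2})/∂ξᵢ∂ξⱼ)(ξ) ≠ 0 for all ξ ≠ 0. -/

import Mathlib

open MeasureTheory Real Filter Topology
open scoped RealInnerProductSpace

noncomputable section

/-- Evaluation of a multivariate polynomial at a point of Euclidean space. -/
def polyEval {n : ℕ} (p : MvPolynomial (Fin n) ℝ) (ξ : EuclideanSpace ℝ (Fin n)) : ℝ :=
  MvPolynomial.eval (fun i => ξ i) p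


/-- Determinant of the Hessian matrix of a real-valued function on Euclidean space. -/
def hessianDet {n : ℕ} (f : EuclideanSpace ℝ (Fin n) → ℝ) (ξ : EuclideanSpace ℝ (Fin n)) : ℝ :=
  Matrix.det (Matrix.of fun i j : Fin n =>
    iteratedFDeriv ℝ 2 f ξ ![EuclideanSpace.single i 1, EuclideanSpace.single j 1])

/-!
Write `Q` for the principal part, positively homogeneous of degree `r = m`. Differentiating twice,
`D²√Q = (2√Q)⁻¹ (D²Q - (2Q)⁻¹ ∇Q ⊗ ∇Q)` is a rank-one perturbation of `D²Q`. Euler's relations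
`∇Q · ξ = r Q` and `ξᵀ D²Q = (r - 1) ∇Qᵀ` let the matrix determinant lemma evaluate it without
inverting `D²Q`: `det D²√Q = (2√Q)⁻ⁿ (r - 2) / (2 (r - 1)) det D²Q`, nonzero since `r ≥ 4`.
-/

theorem MvPolynomial.IsHomogeneous.eval_smul {σ R : Type*} [CommSemiring R] {φ : MvPolynomial σ R}
    {m : ℕ} (hφ : φ.IsHomogeneous m) (t : R) (x : σ → R) :
    MvPolynomial.eval (t • x) φ = t ^ m * MvPolynomial.eval x φ := by
  simp only [MvPolynomial.eval_eq, Finset.mul_sum]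
  refine Finset.sum_congr rfl fun d hd => ?_
  simp only [Pi.smul_apply, smul_eq_mul, mul_pow, Finset.prod_mul_distrib,
    Finset.prod_pow_eq_pow_sum, ← hφ.degree_eq_sum_deg_support hd]
  ring

theorem contDiff_polyEval {n : ℕ} (p : MvPolynomial (Fin n) ℝ) {k : WithTop ℕ∞} :
    ContDiff ℝ k (polyEval p) := by
  have := AnalyticOnNhd.eval_continuousLinearMap' (EuclideanSpace.proj (𝕜 := ℝ) (ι := Fin n)) p
  exact this.contDiff

section Homogeneous

variable {E F : Type*} [NormedAddCommGroup E] [NormedSpace ℝ E] [NormedAddCommGroup F]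
  [NormedSpace ℝ F] {f : E → F} {r : ℝ}

theorem fderiv_apply_self_of_homogeneous {x : E} (hf : ∀ t : ℝ, 0 < t → f (t • x) = t ^ r • f x)
    (hd : DifferentiableAt ℝ f x) : fderiv ℝ f x x = r • f x := by
  have hray : HasDerivAt (fun t : ℝ => f (t • x)) (fderiv ℝ f x x) 1 := by
    have hline : HasDerivAt (fun t : ℝ => t • x) x 1 := by
      simpa using (hasDerivAt_id (1 : ℝ)).smul_const x
    exact hd.hasFDerivAt.comp_hasDerivAt_of_eq 1 hline (one_smul ℝ x).symm
  have hpow : HasDerivAt (fun t : ℝ => t ^ r • f x) (r • f x) 1 := by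
    simpa using (Real.hasDerivAt_rpow_const (p := r) (Or.inl one_ne_zero)).smul_const (f x)
  exact hray.unique (hpow.congr_of_eventuallyEq ((lt_mem_nhds one_pos).mono hf))

theorem fderiv_smul_of_homogeneous (hf : ∀ t : ℝ, 0 < t → ∀ x, f (t • x) = t ^ r • f x)
    (hd : Differentiable ℝ f) {t : ℝ} (ht : 0 < t) (x : E) :
    fderiv ℝ f (t • x) = t ^ (r - 1) • fderiv ℝ f x := by
  have hcomp : HasFDerivAt (fun y => f (t • y)) (t • fderiv ℝ f (t • x)) x := by
    have := (hd (t • x)).hasFDerivAt.comp x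
      ((t • ContinuousLinearMap.id ℝ E).hasFDerivAt (x := x))
    rwa [ContinuousLinearMap.comp_smul, ContinuousLinearMap.comp_id] at this
  have hscale : HasFDerivAt (fun y => f (t • y)) (t ^ r • fderiv ℝ f x) x := by
    rw [funext (hf t ht)]; exact (hd x).hasFDerivAt.const_smul (t ^ r)
  rw [Real.rpow_sub_one ht.ne', div_eq_inv_mul, mul_smul, hscale.unique hcomp, smul_smul,
    inv_mul_cancel₀ ht.ne', one_smul]

theorem fderiv_fderiv_apply_self_of_homogeneous
    (hf : ∀ t : ℝ, 0 < t → ∀ x, f (t • x) = t ^ r • f x) (hd : ContDiff ℝ 2 f) (x : E) :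
    fderiv ℝ (fderiv ℝ f) x x = (r - 1) • fderiv ℝ f x :=
  fderiv_apply_self_of_homogeneous
    (fun _ ht => fderiv_smul_of_homogeneous hf (hd.differentiable two_ne_zero) ht x)
    ((hd.fderiv_right one_add_one_eq_two.le).differentiable one_ne_zero x)

end Homogeneous

theorem hasDerivAt_inv_two_mul_sqrt {s : ℝ} (hs : 0 < s) :
    HasDerivAt (fun s => (2 * √s)⁻¹) (-(4 * s * √s)⁻¹) s := by
  refine (((Real.hasDerivAt_sqrt hs.ne').const_mul 2).inv (by positivity)).congr_deriv ?_
  have hsqrt : 0 < √s := Real.sqrt_pos.mpr hs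
  field_simp
  rw [Real.sq_sqrt hs.le]
  ring

theorem fderiv_fderiv_sqrt {E : Type*} [NormedAddCommGroup E] [NormedSpace ℝ E] {Q : E → ℝ}
    (hQ : ContDiff ℝ 2 Q) {x : E} (hx : 0 < Q x) :
    fderiv ℝ (fderiv ℝ fun y => √(Q y)) x = (2 * √(Q x))⁻¹ •
      (fderiv ℝ (fderiv ℝ Q) x - (2 * Q x)⁻¹ • (fderiv ℝ Q x).smulRight (fderiv ℝ Q x)) := by
  have hQd : Differentiable ℝ Q := hQ.differentiable two_ne_zero
  have hQ'd : DifferentiableAt ℝ (fderiv ℝ Q) x :=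
    (hQ.fderiv_right one_add_one_eq_two.le).differentiable one_ne_zero x
  have hgrad : fderiv ℝ (fun y => √(Q y)) =ᶠ[𝓝 x] fun y => (2 * √(Q y))⁻¹ • fderiv ℝ Q y := by
    filter_upwards [hQ.continuous.continuousAt.eventually (lt_mem_nhds hx)] with y hy
    have := ((Real.hasDerivAt_sqrt hy.ne').comp_hasFDerivAt y (hQd y).hasFDerivAt).fderiv
    rwa [one_div] at this
  have hcoef : HasFDerivAt (fun y => (2 * √(Q y))⁻¹) (-(4 * Q x * √(Q x))⁻¹ • fderiv ℝ Q x) x :=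
    (hasDerivAt_inv_two_mul_sqrt hx).comp_hasFDerivAt x (hQd x).hasFDerivAt
  rw [hgrad.fderiv_eq]
  refine (hcoef.smul hQ'd.hasFDerivAt).fderiv.trans ?_
  ext u v
  simp only [add_apply, smul_apply, sub_apply,
    ContinuousLinearMap.smulRight_apply, smul_eq_mul]
  ring

open Matrix

theorem Matrix.det_add_vecMulVec_of_vecMul_eq {R ι : Type*} [CommRing R] [Fintype ι]
    [DecidableEq ι] {A : Matrix ι ι R} {u w : ι → R} (h : u ᵥ* A = w) (v : ι → R) :
    (A + vecMulVec v w).det = (1 + u ⬝ᵥ v) * A.det := by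
  have hfactor : A + vecMulVec v w = (1 + vecMulVec v u) * A := by
    rw [Matrix.add_mul, Matrix.one_mul, vecMulVec_mul, h]
  rw [hfactor, det_mul, vecMulVec_eq Unit, det_one_add_replicateCol_mul_replicateRow]

section BilinMatrix

variable {ι : Type*} [DecidableEq ι]

def bilinMatrix (B : EuclideanSpace ℝ ι →L[ℝ] EuclideanSpace ℝ ι →L[ℝ] ℝ) : Matrix ι ι ℝ :=
  Matrix.of fun i j => B (EuclideanSpace.single i 1) (EuclideanSpace.single j 1)

theorem dotProduct_apply_single [Fintype ι] (v : EuclideanSpace ℝ ι)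
    (L : EuclideanSpace ℝ ι →L[ℝ] ℝ) :
    v.ofLp ⬝ᵥ (fun i => L (EuclideanSpace.single i 1)) = L v := by
  conv_rhs => rw [← (EuclideanSpace.basisFun ι ℝ).sum_repr v]
  simp [dotProduct]

theorem vecMul_bilinMatrix [Fintype ι] (v : EuclideanSpace ℝ ι)
    (B : EuclideanSpace ℝ ι →L[ℝ] EuclideanSpace ℝ ι →L[ℝ] ℝ) :
    v.ofLp ᵥ* bilinMatrix B = fun j => B v (EuclideanSpace.single j 1) :=
  funext fun j => dotProduct_apply_single v (B.flip (EuclideanSpace.single j 1))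

theorem bilinMatrix_smul (c : ℝ) (B : EuclideanSpace ℝ ι →L[ℝ] EuclideanSpace ℝ ι →L[ℝ] ℝ) :
    bilinMatrix (c • B) = c • bilinMatrix B := by
  ext; simp [bilinMatrix]

theorem bilinMatrix_sub (B C : EuclideanSpace ℝ ι →L[ℝ] EuclideanSpace ℝ ι →L[ℝ] ℝ) :
    bilinMatrix (B - C) = bilinMatrix B - bilinMatrix C := by
  ext; simp [bilinMatrix]

theorem bilinMatrix_smulRight (L L' : EuclideanSpace ℝ ι →L[ℝ] ℝ) :
    bilinMatrix (L.smulRight L') = vecMulVec (fun i => L (EuclideanSpace.single i 1))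
      (fun j => L' (EuclideanSpace.single j 1)) := by
  ext; simp [bilinMatrix, vecMulVec_apply]

end BilinMatrix

theorem hessianDet_eq_det_bilinMatrix {n : ℕ} (f : EuclideanSpace ℝ (Fin n) → ℝ)
    (ξ : EuclideanSpace ℝ (Fin n)) :
    hessianDet f ξ = (bilinMatrix (fderiv ℝ (fderiv ℝ f) ξ)).det := by
  simp [hessianDet, bilinMatrix, iteratedFDeriv_two_apply]

theorem hessianDet_sqrt_of_homogeneous {n : ℕ} {Q : EuclideanSpace ℝ (Fin n) → ℝ} {r : ℝ}
    (hQ : ContDiff ℝ 2 Q) (hhom : ∀ t : ℝ, 0 < t → ∀ x, Q (t • x) = t ^ r * Q x) (hr : r ≠ 1)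
    {ξ : EuclideanSpace ℝ (Fin n)} (hξ : 0 < Q ξ) :
    hessianDet (fun x => √(Q x)) ξ =
      (2 * √(Q ξ))⁻¹ ^ n * ((r - 2) / (2 * (r - 1))) * hessianDet Q ξ := by
  have hr₁ : r - 1 ≠ 0 := sub_ne_zero.mpr hr
  set w : Fin n → ℝ := fun j => fderiv ℝ Q ξ (EuclideanSpace.single j 1)
  have hvec : ((r - 1)⁻¹ • ξ.ofLp) ᵥ* bilinMatrix (fderiv ℝ (fderiv ℝ Q) ξ) = w := by
    rw [smul_vecMul, vecMul_bilinMatrix, fderiv_fderiv_apply_self_of_homogeneous hhom hQ]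
    ext j
    simp only [Pi.smul_apply, _root_.smul_apply, smul_eq_mul]
    exact inv_mul_cancel_left₀ hr₁ _
  have hEuler : fderiv ℝ Q ξ ξ = r * Q ξ :=
    fderiv_apply_self_of_homogeneous (hhom · · ξ) (hQ.differentiable two_ne_zero ξ)
  rw [hessianDet_eq_det_bilinMatrix, hessianDet_eq_det_bilinMatrix, fderiv_fderiv_sqrt hQ hξ,
    bilinMatrix_smul, bilinMatrix_sub, bilinMatrix_smul, bilinMatrix_smulRight, det_smul,
    Fintype.card_fin, sub_eq_add_neg, ← neg_smul, ← smul_vecMulVec,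
    det_add_vecMulVec_of_vecMul_eq hvec, dotProduct_smul, smul_dotProduct,
    dotProduct_apply_single, hEuler]
  have hQξ : Q ξ ≠ 0 := hξ.ne'
  simp only [smul_eq_mul]
  field_simp
  ring

theorem hessianDet_sqrt_principal_ne_zero_general (n m : ℕ) (hm4 : 4 ≤ m)
    (p : MvPolynomial (Fin n) ℝ)
    (hell : ∀ ξ : EuclideanSpace ℝ (Fin n), ξ ≠ 0 →
        0 < polyEval (MvPolynomial.homogeneousComponent m p) ξ)
    (hnondeg : ∀ ξ : EuclideanSpace ℝ (Fin n), ξ ≠ 0 →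
        hessianDet (polyEval (MvPolynomial.homogeneousComponent m p)) ξ ≠ 0) :
    ∀ ξ : EuclideanSpace ℝ (Fin n), ξ ≠ 0 →
      hessianDet
        (fun ξ' => Real.sqrt (polyEval (MvPolynomial.homogeneousComponent m p) ξ')) ξ ≠ 0 := by
  intro ξ hξ
  have hm : (4 : ℝ) ≤ m := by exact_mod_cast hm4
  have hhom : ∀ t : ℝ, 0 < t → ∀ x, polyEval (MvPolynomial.homogeneousComponent m p) (t • x) =
      t ^ (m : ℝ) * polyEval (MvPolynomial.homogeneousComponent m p) x := fun t _ x => by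
    rw [Real.rpow_natCast]
    exact (MvPolynomial.homogeneousComponent_isHomogeneous m p).eval_smul t _
  have hsqrt := Real.sqrt_pos.mpr (hell ξ hξ)
  rw [hessianDet_sqrt_of_homogeneous (contDiff_polyEval _) hhom (by linarith) (hell ξ hξ)]
  exact mul_ne_zero (mul_ne_zero (by positivity) (div_ne_zero (by linarith) (by linarith)))
    (hnondeg ξ hξ)

/-- Equation (5.1): under (H1) and (H2), the Hessian determinant of `P_m^{1/2}` is
nonzero away from the origin. -/
theorem hessianDet_sqrt_principal_ne_zero (n m : ℕ) (hn : 2 ≤ n) (hm4 : 4 ≤ m)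
    (hmeven : Even m) (p : MvPolynomial (Fin n) ℝ) (hdeg : p.totalDegree = m)
    (hpos : ∀ ξ : EuclideanSpace ℝ (Fin n), 0 < polyEval p ξ)
    (hell : ∀ ξ : EuclideanSpace ℝ (Fin n), ξ ≠ 0 →
        0 < polyEval (MvPolynomial.homogeneousComponent m p) ξ)
    (hnondeg : ∀ ξ : EuclideanSpace ℝ (Fin n), ξ ≠ 0 →
        hessianDet (polyEval (MvPolynomial.homogeneousComponent m p)) ξ ≠ 0) :
    ∀ ξ : EuclideanSpace ℝ (Fin n), ξ ≠ 0 →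
      hessianDet
        (fun ξ' => Real.sqrt (polyEval (MvPolynomial.homogeneousComponent m p) ξ')) ξ ≠ 0 :=
  hessianDet_sqrt_principal_ne_zero_general n m hm4 p hell hnondeg
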